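/- arXiv:2209.05803 — 3 statements merged into one kernel-verified Lean document; each statement's English description precedes it below -/
import Mathlib

section
/- Let S be a special numerical semigroup (every special gap h with h ≠ F(S) satisfies h < m(S)). If S is neither irreducible nor ordinary, then every natural number x with m(S) ≤ x < F(S) belongs to S. -/
open Set

/-- A numerical semigroup: a submonoid of ℕ with finite complement. -/
def IsNumSgp (S : Set ℕ) : Prop :=
  0 ∈ S ∧ (∀ a ∈ S, ∀ b ∈ S, a + b ∈ S) ∧ Sᶜ.Finite

/-- The Frobenius number: the largest gap. -/
noncomputable def frob (S : Set ℕ) : ℕ := sSup Sᶜ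

/-- The multiplicity: the least nonzero element. -/
noncomputable def mult (S : Set ℕ) : ℕ := sInf (S \ {0})

/-- The genus: the number of gaps. -/
noncomputable def genus (S : Set ℕ) : ℕ := Sᶜ.ncard

/-- The number of left elements: elements of S smaller than the Frobenius number. -/
noncomputable def leftEls (S : Set ℕ) : ℕ := {s ∈ S | s < frob S}.ncard

/-- x is a minimal generator of S: nonzero and not a sum of two nonzero elements of S. -/
def IsMinGen (S : Set ℕ) (x : ℕ) : Prop :=
  x ∈ S ∧ x ≠ 0 ∧ ¬ ∃ a ∈ S, ∃ b ∈ S, a ≠ 0 ∧ b ≠ 0 ∧ x = a + b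

/-- The embedding dimension: number of minimal generators. -/
noncomputable def edim (S : Set ℕ) : ℕ := {x | IsMinGen S x}.ncard

/-- The set of special gaps of S. -/
def SG (S : Set ℕ) : Set ℕ :=
  {h | h ∉ S ∧ 2 * h ∈ S ∧ ∀ s ∈ S, s ≠ 0 → h + s ∈ S}

/-- Irreducible numerical semigroup (characterization via special gaps). -/
def IsIrred (S : Set ℕ) : Prop := SG S = {frob S}

/-- Ordinary numerical semigroup. -/
def IsOrdinary (S : Set ℕ) : Prop := ∃ c, S = {0} ∪ {m | c ≤ m}

/-- Special numerical semigroup: every special gap other than F(S) is below the multiplicity. -/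
def IsSpecial (S : Set ℕ) : Prop := ∀ h ∈ SG S, h ≠ frob S → h < mult S

/-- The transform 𝒜, defined on non-special numerical semigroups. -/
noncomputable def Atrans (S : Set ℕ) : Set ℕ :=
  (S ∪ {sSup (SG S \ {frob S})}) \ {mult S}

/-- The sub-Frobenius number: the largest gap different from F(S). -/
noncomputable def subFrob (S : Set ℕ) : ℕ := sSup (Sᶜ \ {frob S})

/-- Almost-ordinary: exactly one gap greater than the multiplicity. -/
noncomputable def IsAlmostOrdinary (S : Set ℕ) : Prop := {h | h ∉ S ∧ mult S < h}.ncard = 1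

/-- The transform ℬ of Bras-Amorós. -/
noncomputable def Btrans (S : Set ℕ) : Set ℕ := (S \ {mult S}) ∪ {subFrob S}



/-!
Let `h = subFrob S`. A gap `x` with `m(S) ≤ x < F(S)` gives `m(S) ≤ h`, so by specialness `h` is
not a special gap; since every gap above `h` equals `F(S)`, this forces `F(S) = h + s` with
`s ∈ S` nonzero or `F(S) = 2h`, and either way `m(S) ≤ F(S) - h`. On the other hand, `S` not
being irreducible gives a special gap `h₀ < m(S)`, and `F(S) - h₀` is a gap (as `h₀ + (F(S) - h₀)`
is), so `F(S) - h₀ ≤ h`. Together `m(S) ≤ F(S) - h ≤ h₀ < m(S)`.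
-/

section

variable {S : Set ℕ}

theorem sub_notMem_of_mem_SG {h g : ℕ} (hh : h ∈ SG S) (hg : g ∉ S) (hhg : h < g) :
    g - h ∉ S := fun hgh => hg <| by
  simpa [Nat.add_sub_cancel' hhg.le] using hh.2.2 _ hgh (by omega)

theorem mult_le {s : ℕ} (hs : s ∈ S) (hs0 : s ≠ 0) : mult S ≤ s :=
  Nat.sInf_le ⟨hs, hs0⟩

namespace IsNumSgp

theorem le_frob (hS : IsNumSgp S) {y : ℕ} (hy : y ∉ S) : y ≤ frob S :=
  le_csSup hS.2.2.bddAbove hy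

theorem frob_notMem (hS : IsNumSgp S) (hne : Sᶜ.Nonempty) : frob S ∉ S :=
  Nat.sSup_mem hne hS.2.2.bddAbove

theorem ne_zero_of_notMem (hS : IsNumSgp S) {y : ℕ} (hy : y ∉ S) : y ≠ 0 := by
  rintro rfl
  exact hy hS.1

theorem frob_mem_SG (hS : IsNumSgp S) (hne : Sᶜ.Nonempty) : frob S ∈ SG S := by
  have hF := hS.frob_notMem hne
  have hF0 := hS.ne_zero_of_notMem hF
  refine ⟨hF, ?_, fun s _ hs0 => ?_⟩
  · by_contra h2
    have := hS.le_frob h2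
    omega
  · by_contra hns
    have := hS.le_frob hns
    omega

theorem exists_mem_SG_ne_frob (hS : IsNumSgp S) (hne : Sᶜ.Nonempty)
    (hirr : ¬ IsIrred S) : ∃ h ∈ SG S, h ≠ frob S := by
  by_contra! h
  exact hirr (eq_singleton_iff_unique_mem.mpr ⟨hS.frob_mem_SG hne, h⟩)

theorem le_subFrob (hS : IsNumSgp S) {y : ℕ} (hy : y ∉ S) (hyF : y ≠ frob S) :
    y ≤ subFrob S :=
  le_csSup (hS.2.2.subset sdiff_subset).bddAbove ⟨hy, hyF⟩

theorem subFrob_mem (hS : IsNumSgp S) (hne : (Sᶜ \ {frob S}).Nonempty) :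
    subFrob S ∈ Sᶜ \ {frob S} :=
  Nat.sSup_mem hne (hS.2.2.subset sdiff_subset).bddAbove

theorem eq_frob_of_subFrob_lt (hS : IsNumSgp S) {y : ℕ} (hy : y ∉ S)
    (hlt : subFrob S < y) : y = frob S := by
  by_contra hyF
  exact (hS.le_subFrob hy hyF).not_gt hlt

theorem frob_sub_le_subFrob (hS : IsNumSgp S) {h : ℕ} (hh : h ∈ SG S)
    (hhF : h ≠ frob S) : frob S - h ≤ subFrob S := by
  have hh0 := hS.ne_zero_of_notMem hh.1
  have hhle := hS.le_frob hh.1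
  refine hS.le_subFrob (sub_notMem_of_mem_SG hh (hS.frob_notMem ⟨h, hh.1⟩) ?_) ?_ <;> omega

theorem mult_le_frob_sub_subFrob (hS : IsNumSgp S) (hsub : subFrob S ∉ S)
    (hmult : mult S ≤ subFrob S) (hnot : subFrob S ∉ SG S) : mult S ≤ frob S - subFrob S := by
  have hsub0 := hS.ne_zero_of_notMem hsub
  simp only [SG, mem_ofPred_eq, not_and, not_forall] at hnot
  by_cases h2 : 2 * subFrob S ∈ S
  · obtain ⟨s, hs, hs0, hns⟩ := hnot hsub h2
    have hF := hS.eq_frob_of_subFrob_lt hns (by omega)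
    have := mult_le hs hs0
    omega
  · have hF := hS.eq_frob_of_subFrob_lt h2 (by omega)
    omega

end IsNumSgp

end

theorem special_structure_general (S : Set ℕ) (hS : IsNumSgp S) (hsp : IsSpecial S)
    (hirr : ¬ IsIrred S) :
    ∀ x : ℕ, mult S ≤ x → x < frob S → x ∈ S := by
  intro x hmx hxF
  by_contra hx
  obtain ⟨hsub, hsubF⟩ := hS.subFrob_mem ⟨x, hx, hxF.ne⟩
  have hmsub : mult S ≤ subFrob S := hmx.trans (hS.le_subFrob hx hxF.ne)
  have hsubSG : subFrob S ∉ SG S := fun h => (hsp _ h hsubF).not_ge hmsub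
  have hm := hS.mult_le_frob_sub_subFrob hsub hmsub hsubSG
  obtain ⟨h₀, hh₀, hh₀F⟩ := hS.exists_mem_SG_ne_frob ⟨x, hx⟩ hirr
  have hh₀m := hsp h₀ hh₀ hh₀F
  have hFh₀ := hS.frob_sub_le_subFrob hh₀ hh₀F
  omega

theorem special_structure (S : Set ℕ) (hS : IsNumSgp S) (hsp : IsSpecial S)
    (hirr : ¬ IsIrred S) (hord : ¬ IsOrdinary S) :
    ∀ x : ℕ, mult S ≤ x → x < frob S → x ∈ S :=
  special_structure_general S hS hsp hirr
end

section
/- Let S be a non-special numerical semigroup, h = max(SG(S) \ {F(S)}) its largest special gap different from the Frobenius number, and T = (S ∪ {h}) \ {m(S)}. Then T is a numerical semigroup with F(T) = F(S), g(T) = g(S), and n(T) = n(S). -/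
open Set

/-! Adjoining a special gap `h` keeps `S ∪ {h}` a semigroup, and when `h > m(S)` the multiplicity
stays a minimal generator of `S ∪ {h}`, so it can be removed. The gap `m(S)` thus trades places
with the gap `h`: the number of gaps is unchanged, and since `m(S) < h < F(S)` the largest gap and
the number of elements below it are unchanged as well. -/

theorem isMinGen_of_forall_le {S : Set ℕ} {x : ℕ} (hxS : x ∈ S) (hx0 : x ≠ 0)
    (hle : ∀ s ∈ S, s ≠ 0 → x ≤ s) : IsMinGen S x := by
  refine ⟨hxS, hx0, ?_⟩
  rintro ⟨a, ha, b, hb, ha0, hb0, rfl⟩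
  have := hle a ha ha0
  omega

theorem compl_union_singleton_sdiff_singleton (S : Set ℕ) (h m : ℕ) :
    ((S ∪ {h}) \ {m})ᶜ = insert m (Sᶜ \ {h}) := by
  ext x
  by_cases hxm : x = m <;> simp [hxm, and_comm]

theorem mult_le_of_mem {S : Set ℕ} {s : ℕ} (hs : s ∈ S) (hs0 : s ≠ 0) : mult S ≤ s :=
  Nat.sInf_le ⟨hs, hs0⟩

namespace IsNumSgp

variable {S : Set ℕ} (hS : IsNumSgp S)
include hS

theorem infinite : S.Infinite := by
  simpa using hS.2.2.infinite_compl

theorem mult_mem_sdiff_zero : mult S ∈ S \ {0} := by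
  obtain ⟨x, hxS, hx⟩ := hS.infinite.exists_gt 0
  exact Nat.sInf_mem ⟨x, hxS, hx.ne'⟩

theorem mult_mem : mult S ∈ S := hS.mult_mem_sdiff_zero.1

theorem mult_ne_zero : mult S ≠ 0 := hS.mult_mem_sdiff_zero.2

theorem le_frob_s10 {x : ℕ} (hx : x ∉ S) : x ≤ frob S :=
  le_csSup hS.2.2.bddAbove hx

theorem frob_notMem_s10 {x : ℕ} (hx : x ∉ S) : frob S ∉ S :=
  Nat.sSup_mem ⟨x, hx⟩ hS.2.2.bddAbove

theorem union_singleton {h : ℕ} (hh : h ∈ SG S) : IsNumSgp (S ∪ {h}) := by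
  obtain ⟨h0S, hadd, hfin⟩ := hS
  obtain ⟨-, h2h, hhs⟩ := hh
  have hadd_h : ∀ s ∈ S, h + s ∈ S ∪ {h} := fun s hs => by
    rcases eq_or_ne s 0 with rfl | hs0
    · simp
    · exact Or.inl (hhs s hs hs0)
  refine ⟨Or.inl h0S, ?_, hfin.subset (compl_subset_compl.2 subset_union_left)⟩
  rintro a (ha | rfl) b (hb | rfl)
  · exact Or.inl (hadd a ha b hb)
  · exact add_comm a b ▸ hadd_h a ha
  · exact hadd_h b hb
  · exact Or.inl (by rwa [← two_mul])

theorem sdiff_singleton {x : ℕ} (hx : IsMinGen S x) : IsNumSgp (S \ {x}) := by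
  obtain ⟨h0S, hadd, hfin⟩ := hS
  obtain ⟨-, hx0, hirr⟩ := hx
  refine ⟨⟨h0S, Ne.symm hx0⟩, ?_, ?_⟩
  · rintro a ⟨ha, hax⟩ b ⟨hb, hbx⟩
    refine ⟨hadd a ha b hb, fun habx => ?_⟩
    rcases eq_or_ne a 0 with rfl | ha0
    · simp_all
    rcases eq_or_ne b 0 with rfl | hb0
    · simp_all
    exact hirr ⟨a, ha, b, hb, ha0, hb0, habx.symm⟩
  · rw [compl_sdiff]
    exact (finite_singleton x).union hfin

section ExchangeGap

variable {h : ℕ} (hhS : h ∉ S) (hmh : mult S < h)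
include hhS hmh

theorem union_sdiff_mult (hh : h ∈ SG S) : IsNumSgp ((S ∪ {h}) \ {mult S}) := by
  refine (hS.union_singleton hh).sdiff_singleton
    (isMinGen_of_forall_le (Or.inl hS.mult_mem) hS.mult_ne_zero ?_)
  rintro s (hs | rfl) hs0
  · exact mult_le_of_mem hs hs0
  · exact hmh.le

theorem frob_union_sdiff_mult (hhf : h ≠ frob S) : frob ((S ∪ {h}) \ {mult S}) = frob S := by
  have hmf : mult S < frob S := hmh.trans_le (hS.le_frob_s10 hhS)
  refine IsGreatest.csSup_eq ⟨?_, ?_⟩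
  · rw [compl_union_singleton_sdiff_singleton]
    exact Or.inr ⟨hS.frob_notMem_s10 hhS, hhf.symm⟩
  · rw [compl_union_singleton_sdiff_singleton]
    rintro x (rfl | ⟨hx, -⟩)
    · exact hmf.le
    · exact hS.le_frob_s10 hx

omit hmh in
theorem genus_union_sdiff_mult : genus ((S ∪ {h}) \ {mult S}) = genus S := by
  rw [genus, genus, compl_union_singleton_sdiff_singleton]
  exact ncard_exchange (fun hm => hm hS.mult_mem) hhS

theorem leftEls_union_sdiff_mult (hhf : h ≠ frob S) :
    leftEls ((S ∪ {h}) \ {mult S}) = leftEls S := by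
  have hhf' : h < frob S := (hS.le_frob_s10 hhS).lt_of_ne hhf
  have hleft : {s ∈ (S ∪ {h}) \ {mult S} | s < frob S}
      = insert h ({s ∈ S | s < frob S} \ {mult S}) := by
    ext x
    by_cases hxh : x = h
    · subst hxh
      simp [hhS, hhf', hmh.ne']
    · simp [hxh, and_right_comm]
  rw [leftEls, leftEls, hS.frob_union_sdiff_mult hhS hmh hhf, hleft]
  exact ncard_exchange (fun hh => hhS hh.1) ⟨hS.mult_mem, hmh.trans hhf'⟩

end ExchangeGap

theorem sSup_SG_sdiff_frob_mem_and_mult_lt (hsp : ¬ IsSpecial S) :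
    sSup (SG S \ {frob S}) ∈ SG S \ {frob S} ∧ mult S < sSup (SG S \ {frob S}) := by
  simp only [IsSpecial, not_forall, not_lt] at hsp
  obtain ⟨h, hh, hhf, hmh⟩ := hsp
  have hbdd : BddAbove (SG S \ {frob S}) :=
    hS.2.2.bddAbove.mono fun x hx => hx.1.1
  have hmem : sSup (SG S \ {frob S}) ∈ SG S \ {frob S} := Nat.sSup_mem ⟨h, hh, hhf⟩ hbdd
  refine ⟨hmem, lt_of_le_of_ne (hmh.trans (le_csSup hbdd ⟨hh, hhf⟩)) fun hm => ?_⟩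
  exact hmem.1.1 (hm ▸ hS.mult_mem)

end IsNumSgp

theorem Atrans_invariants (S : Set ℕ) (hS : IsNumSgp S) (hsp : ¬ IsSpecial S) :
    IsNumSgp (Atrans S) ∧ frob (Atrans S) = frob S ∧ genus (Atrans S) = genus S ∧
      leftEls (Atrans S) = leftEls S := by
  obtain ⟨⟨hhSG, hhf⟩, hmh⟩ := hS.sSup_SG_sdiff_frob_mem_and_mult_lt hsp
  have hhS := hhSG.1
  exact ⟨hS.union_sdiff_mult hhS hmh hhSG, hS.frob_union_sdiff_mult hhS hmh hhf,
    hS.genus_union_sdiff_mult hhS, hS.leftEls_union_sdiff_mult hhS hmh hhf⟩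
end

section
/- Let S be a non-special numerical semigroup and T = A(S) = (S ∪ {h}) \ {m(S)} where h = max(SG(S) \ {F(S)}). Then T is neither irreducible nor ordinary. -/
/-! Let `h` be the largest special gap of `S` other than `F(S)`; non-speciality gives `m(S) < h`,
and `h < F(S)`. In `T = (S ∪ {h}) \ {m(S)}` the removed multiplicity becomes a special gap
(`2 m(S) ∈ S`, and `m(S) + h ∈ S` since `h` is special), while `F(S)` is still a gap of `T`.
So `SG(T)` contains `m(S) < F(S) ≤ F(T)`, and `T` is not irreducible. An ordinary semigroup
containing the nonzero element `h` contains every integer above `h`, in particular `F(S)`. -/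

open Set

theorem le_frob_of_notMem {S : Set ℕ} {x : ℕ} (hS : Sᶜ.Finite) (hx : x ∉ S) : x ≤ frob S :=
  le_csSup hS.bddAbove hx

theorem frob_notMem {S : Set ℕ} (hS : Sᶜ.Finite) (hne : Sᶜ.Nonempty) : frob S ∉ S :=
  hne.csSup_mem hS

theorem IsOrdinary.mem_of_le {T : Set ℕ} {a b : ℕ} (hT : IsOrdinary T) (ha : a ∈ T)
    (ha0 : a ≠ 0) (hab : a ≤ b) : b ∈ T := by
  obtain ⟨c, rfl⟩ := hT
  rcases ha with ha | ha
  · exact absurd ha ha0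
  · exact Or.inr (le_trans ha hab)

theorem mem_SG_union_diff {S : Set ℕ} {a h : ℕ} (hadd : ∀ x ∈ S, ∀ y ∈ S, x + y ∈ S)
    (ha : a ∈ S) (ha0 : a ≠ 0) (hha : h + a ∈ S) : a ∈ SG ((S ∪ {h}) \ {a}) := by
  refine ⟨fun hmem => hmem.2 rfl, ⟨Or.inl (two_mul a ▸ hadd a ha a ha), ?_⟩, ?_⟩
  · exact fun h2a => ha0 (by rw [mem_singleton_iff] at h2a; omega)
  · rintro s ⟨hs | rfl, -⟩ hs0
    · exact ⟨Or.inl (hadd a ha s hs), by simpa using hs0⟩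
    · exact ⟨Or.inl (add_comm a s ▸ hha), by simpa using hs0⟩

theorem compl_union_diff_finite {S : Set ℕ} (hS : Sᶜ.Finite) (h a : ℕ) :
    ((S ∪ {h}) \ {a})ᶜ.Finite := by
  refine (hS.union (finite_singleton a)).subset fun x hx => ?_
  by_cases hxa : x = a
  · exact Or.inr hxa
  · exact Or.inl fun hxS => hx ⟨Or.inl hxS, hxa⟩

namespace IsNumSgp

variable {S : Set ℕ}

theorem mult_mem_diff_zero (hS : IsNumSgp S) : mult S ∈ S \ {0} := by
  have hSinf : S.Infinite := by simpa using hS.2.2.infinite_compl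
  exact Nat.sInf_mem (hSinf.sdiff (finite_singleton 0)).nonempty

theorem sSup_SG_diff_frob_mem (hS : IsNumSgp S) (hsp : ¬ IsSpecial S) :
    sSup (SG S \ {frob S}) ∈ SG S \ {frob S} := by
  simp only [IsSpecial, not_forall, not_lt] at hsp
  obtain ⟨g, hg, hgF, -⟩ := hsp
  exact Nonempty.csSup_mem ⟨g, hg, hgF⟩ (hS.2.2.subset fun _ hx => hx.1.1)

theorem mult_lt_sSup_SG_diff_frob (hS : IsNumSgp S) (hsp : ¬ IsSpecial S) :
    mult S < sSup (SG S \ {frob S}) := by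
  have hmax := hS.sSup_SG_diff_frob_mem hsp
  simp only [IsSpecial, not_forall, not_lt] at hsp
  obtain ⟨g, hg, hgF, hmg⟩ := hsp
  have hgmax : g ≤ sSup (SG S \ {frob S}) :=
    le_csSup (hS.2.2.subset fun _ hx => hx.1.1).bddAbove ⟨hg, hgF⟩
  refine (hmg.trans hgmax).lt_of_ne fun hm => ?_
  exact hmax.1.1 (hm ▸ hS.mult_mem_diff_zero.1)

end IsNumSgp

theorem Atrans_not_irred_not_ordinary (S : Set ℕ) (hS : IsNumSgp S) (hsp : ¬ IsSpecial S) :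
    ¬ IsIrred (Atrans S) ∧ ¬ IsOrdinary (Atrans S) := by
  set h := sSup (SG S \ {frob S})
  have hh : h ∈ SG S \ {frob S} := hS.sSup_SG_diff_frob_mem hsp
  have hmh : mult S < h := hS.mult_lt_sSup_SG_diff_frob hsp
  have hhF : h < frob S := (le_frob_of_notMem hS.2.2 hh.1.1).lt_of_ne hh.2
  obtain ⟨hmS, hm0⟩ := hS.mult_mem_diff_zero
  have hFT : frob S ∉ Atrans S := by
    rintro ⟨hF | hF, -⟩
    · exact frob_notMem hS.2.2 ⟨h, hh.1.1⟩ hF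
    · exact hhF.ne' hF
  have hhT : h ∈ Atrans S := ⟨Or.inr rfl, hmh.ne'⟩
  constructor
  · intro hirr
    have hmSG : mult S ∈ SG (Atrans S) :=
      mem_SG_union_diff hS.2.1 hmS hm0 (hh.1.2.2 _ hmS hm0)
    rw [hirr, mem_singleton_iff] at hmSG
    have hFle : frob S ≤ frob (Atrans S) :=
      le_frob_of_notMem (compl_union_diff_finite hS.2.2 h (mult S)) hFT
    omega
  · intro hord
    exact hFT (hord.mem_of_le hhT (by omega) hhF.le)
end
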